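/- arXiv:2604.00322 — 5 statements merged into one kernel-verified Lean document; each statement's English description precedes it below -/
import Mathlib

section
/- For every N ≥ 2 and every q ∈ (0,1), the quenched free energy is strictly smaller than the annealed free energy: E[log Z_N(q,·)] < log E[Z_N(q,·)], where E denotes expectation over Haar-random U ∈ U(N). Equivalently, ∑_{d=1}^{N} q^d + N·∑_{d=N+1}^∞ q^d/d < −∑_{n=1}^{N} log(1 − q^n). -/
open MeasureTheory Matrix

noncomputable section

instance unitaryGroup.topologicalGroup (N : ℕ) :
    IsTopologicalGroup (Matrix.unitaryGroup (Fin N) ℂ) where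
  continuous_mul := Continuous.subtype_mk
    ((continuous_subtype_val.comp continuous_fst).mul
      (continuous_subtype_val.comp continuous_snd)) _
  continuous_inv := Continuous.subtype_mk
    (continuous_star.comp continuous_subtype_val) _

theorem unitaryGroup.isCompact (N : ℕ) :
    IsCompact (Matrix.unitaryGroup (Fin N) ℂ : Set (Matrix (Fin N) (Fin N) ℂ)) := by
  have hK : IsCompact {M : Matrix (Fin N) (Fin N) ℂ | ∀ i j, ‖M i j‖ ≤ 1} := by
    have h1 : {M : Matrix (Fin N) (Fin N) ℂ | ∀ i j, ‖M i j‖ ≤ 1} =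
        (Set.univ.pi fun _ : Fin N => Set.univ.pi fun _ : Fin N => Metric.closedBall (0:ℂ) 1 :
          Set (Matrix (Fin N) (Fin N) ℂ)) := by
      ext M
      constructor
      · intro h i _ j _
        simpa [Metric.mem_closedBall, dist_zero_right] using h i j
      · intro h i j
        simpa [Metric.mem_closedBall, dist_zero_right] using
          h i (Set.mem_univ i) j (Set.mem_univ j)
    rw [h1]
    exact isCompact_univ_pi fun _ => isCompact_univ_pi fun _ => isCompact_closedBall 0 1
  apply hK.of_isClosed_subset
  · have hcont : Continuous fun U : Matrix (Fin N) (Fin N) ℂ =>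
        ((star U * U, U * star U) : Matrix (Fin N) (Fin N) ℂ × Matrix (Fin N) (Fin N) ℂ) :=
      (continuous_star.mul continuous_id).prodMk (continuous_id.mul continuous_star)
    have heq : (Matrix.unitaryGroup (Fin N) ℂ : Set (Matrix (Fin N) (Fin N) ℂ)) =
        (fun U : Matrix (Fin N) (Fin N) ℂ =>
          ((star U * U, U * star U) : Matrix (Fin N) (Fin N) ℂ × Matrix (Fin N) (Fin N) ℂ)) ⁻¹'
          {((1 : Matrix (Fin N) (Fin N) ℂ), (1 : Matrix (Fin N) (Fin N) ℂ))} := by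
      ext U
      simp only [Set.mem_preimage, Set.mem_singleton_iff, Prod.mk.injEq, SetLike.mem_coe,
        Unitary.mem_iff]
    rw [heq]
    exact isClosed_singleton.preimage hcont
  · intro U hU i j
    have h2 : U * star U = 1 := Matrix.mem_unitaryGroup_iff.mp hU
    have hrow : ∑ k, Complex.normSq (U i k) = 1 := by
      have h2' := congrFun (congrFun h2 i) i
      have h3 : ∑ k, (Complex.normSq (U i k) : ℂ) = 1 := by
        simpa [Matrix.mul_apply, Matrix.star_apply, Matrix.one_apply_eq,
          Complex.mul_conj] using h2'
      exact_mod_cast h3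
    have hle : Complex.normSq (U i j) ≤ 1 := by
      rw [← hrow]
      exact Finset.single_le_sum (fun k _ => Complex.normSq_nonneg _) (Finset.mem_univ j)
    rw [Complex.normSq_eq_norm_sq] at hle
    nlinarith [norm_nonneg (U i j)]

instance unitaryGroup.compactSpace (N : ℕ) :
    CompactSpace (Matrix.unitaryGroup (Fin N) ℂ) :=
  isCompact_iff_compactSpace.mp (unitaryGroup.isCompact N)

instance (N : ℕ) : MeasurableSpace (Matrix.unitaryGroup (Fin N) ℂ) := borel _
instance (N : ℕ) : BorelSpace (Matrix.unitaryGroup (Fin N) ℂ) := ⟨rfl⟩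

/-- The free energy `F_N(q,U) = ∑_{d≥1} (q^d/d)·|Tr U^d|²`. -/
def freeEnergy (N : ℕ) (q : ℝ) (U : Matrix.unitaryGroup (Fin N) ℂ) : ℝ :=
  ∑' d : ℕ, q ^ (d + 1) / (d + 1) *
    ‖Matrix.trace ((U : Matrix (Fin N) (Fin N) ℂ) ^ (d + 1))‖ ^ 2

/-- The Circular Unitary Ensemble: normalized Haar probability measure on `U(N)`. -/
def CUE (N : ℕ) : Measure (Matrix.unitaryGroup (Fin N) ℂ) :=
  ((Measure.haar : Measure (Matrix.unitaryGroup (Fin N) ℂ)) Set.univ)⁻¹ •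
    (Measure.haar : Measure (Matrix.unitaryGroup (Fin N) ℂ))

instance (N : ℕ) : IsProbabilityMeasure (CUE N) := by
  constructor
  rw [CUE, Measure.smul_apply, smul_eq_mul]
  exact ENNReal.inv_mul_cancel (NeZero.ne' _).symm (measure_ne_top _ _)


section P2aux
open Finset

/-- `1 - x^n ≤ n (1-x)` for `0 ≤ x ≤ 1`. -/
lemma one_sub_pow_le_aux {x : ℝ} (h0 : 0 ≤ x) (h1 : x ≤ 1) (n : ℕ) :
    1 - x ^ n ≤ n * (1 - x) := by
  induction n with
  | zero => simp
  | succ n ih =>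
    have hxn : x ^ n ≤ 1 := pow_le_one₀ h0 h1
    have hxn0 : 0 ≤ x ^ n := pow_nonneg h0 n
    push_cast
    nlinarith [pow_succ x n]

/-- AM–GM type bound: `N x^N < ∑_{i<N} x^{2i+1}` for `0<x<1`, `N ≥ 2`. -/
lemma sum_odd_pow_gt {x : ℝ} (hx0 : 0 < x) (hx1 : x < 1) :
    ∀ N : ℕ, 2 ≤ N → (N : ℝ) * x ^ N < ∑ i ∈ range N, x ^ (2 * i + 1) := by
  intro N hN
  induction N with
  | zero => omega
  | succ N ih =>
    rcases Nat.lt_or_ge N 2 with hN2 | hN2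
    · interval_cases N
      · omega
      · simp [Finset.sum_range_succ]
        nlinarith [mul_pos hx0 (pow_pos (sub_pos.2 hx1) 2)]
    · have h1 := ih hN2
      rw [Finset.sum_range_succ]
      have key : ((N : ℝ) + 1) * x ^ (N + 1) ≤ (N : ℝ) * x ^ N + x ^ (2 * N + 1) := by
        have hle : 1 - x ^ N ≤ N * (1 - x) := one_sub_pow_le_aux hx0.le hx1.le N
        have hxN : (0:ℝ) < x ^ N := pow_pos hx0 N
        have e1 : x ^ (N + 1) = x ^ N * x := by ring
        have e2 : x ^ (2 * N + 1) = x ^ N * (x ^ N * x) := by ring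
        have ha1 : x ^ N ≤ 1 := pow_le_one₀ hx0.le hx1.le
        have h3 : x * (1 - x ^ N) ≤ (N : ℝ) * (1 - x) :=
          le_trans (by nlinarith) hle
        have h4 := mul_le_mul_of_nonneg_left h3 hxN.le
        rw [e1, e2]; nlinarith
      push_cast
      nlinarith

/-- The difference function `H(x) = RHS(x) - LHS(x)` (with the tail tsum rewritten via logs). -/
noncomputable def Hfun (N : ℕ) (x : ℝ) : ℝ :=
  -∑ i ∈ range N, Real.log (1 - x ^ (i + 1))
    - ∑ i ∈ range N, x ^ (i + 1)
    + N * Real.log (1 - x)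
    + N * ∑ i ∈ range N, x ^ (i + 1) / (i + 1)

noncomputable def Hder (N : ℕ) (x : ℝ) : ℝ :=
  ∑ i ∈ range N, ((i + 1 : ℝ) * x ^ i / (1 - x ^ (i + 1)))
    - ∑ i ∈ range N, (i + 1 : ℝ) * x ^ i
    - N / (1 - x)
    + N * ∑ i ∈ range N, x ^ i

lemma hasDerivAt_Hfun (N : ℕ) {x : ℝ} (h0 : 0 ≤ x) (h1 : x < 1) :
    HasDerivAt (Hfun N) (Hder N x) x := by
  have hne : ∀ i : ℕ, 1 - x ^ (i + 1) ≠ 0 := by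
    intro i
    have : x ^ (i + 1) < 1 := pow_lt_one₀ h0 h1 (Nat.succ_ne_zero i)
    linarith
  have hx1 : (1 : ℝ) - x ≠ 0 := by linarith
  have L1 : HasDerivAt (fun x : ℝ => ∑ i ∈ range N, Real.log (1 - x ^ (i + 1)))
      (∑ i ∈ range N, -((i + 1 : ℝ) * x ^ i) / (1 - x ^ (i + 1))) x := by
    apply HasDerivAt.fun_sum
    intro i _
    have hp : HasDerivAt (fun x : ℝ => 1 - x ^ (i + 1)) (-((i + 1 : ℝ) * x ^ i)) x := by
      simpa using (hasDerivAt_pow (i + 1) x).const_sub 1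
    exact hp.log (hne i)
  have L2 : HasDerivAt (fun x : ℝ => ∑ i ∈ range N, x ^ (i + 1))
      (∑ i ∈ range N, (i + 1 : ℝ) * x ^ i) x := by
    apply HasDerivAt.fun_sum
    intro i _
    simpa using hasDerivAt_pow (i + 1) x
  have L3 : HasDerivAt (fun x : ℝ => (N : ℝ) * Real.log (1 - x))
      ((N : ℝ) * (-1 / (1 - x))) x := by
    have hp : HasDerivAt (fun x : ℝ => 1 - x) (-1 : ℝ) x := by
      simpa using (hasDerivAt_id x).const_sub 1
    exact (hp.log hx1).const_mul _
  have L4 : HasDerivAt (fun x : ℝ => (N : ℝ) * ∑ i ∈ range N, x ^ (i + 1) / (i + 1))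
      ((N : ℝ) * ∑ i ∈ range N, (i + 1 : ℝ) * x ^ i / (i + 1)) x := by
    apply HasDerivAt.const_mul
    apply HasDerivAt.fun_sum
    intro i _
    simpa using (hasDerivAt_pow (i + 1) x).div_const ((i : ℝ) + 1)
  have H := ((L1.neg.sub L2).add L3).add L4
  refine H.congr_deriv (Eq.symm ?_)
  unfold Hder
  have e4 : (∑ i ∈ range N, (i + 1 : ℝ) * x ^ i / (i + 1)) = ∑ i ∈ range N, x ^ i := by
    apply Finset.sum_congr rfl
    intro i _
    have : ((i : ℝ) + 1) ≠ 0 := by positivity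
    field_simp
  have e1 : (∑ i ∈ range N, -((i + 1 : ℝ) * x ^ i) / (1 - x ^ (i + 1)))
      = -∑ i ∈ range N, ((i + 1 : ℝ) * x ^ i / (1 - x ^ (i + 1))) := by
    rw [← Finset.sum_neg_distrib]
    exact Finset.sum_congr rfl fun i _ => by ring
  rw [e4, e1]
  ring

lemma Hder_pos (N : ℕ) (hN : 2 ≤ N) {x : ℝ} (h0 : 0 < x) (h1 : x < 1) :
    0 < Hder N x := by
  have hx1 : (0 : ℝ) < 1 - x := by linarith
  have key : ∀ i ∈ range N,
      x ^ (2 * i + 1) / (1 - x) ≤ (i + 1 : ℝ) * x ^ i / (1 - x ^ (i + 1)) - (i + 1 : ℝ) * x ^ i := by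
    intro i _
    have hai : (0 : ℝ) < 1 - x ^ (i + 1) := by
      have : x ^ (i + 1) < 1 := pow_lt_one₀ h0.le h1 (Nat.succ_ne_zero i)
      linarith
    have hle : 1 - x ^ (i + 1) ≤ ((i : ℝ) + 1) * (1 - x) := by
      have := one_sub_pow_le_aux h0.le h1.le (i + 1)
      push_cast at this ⊢
      linarith
    rw [div_sub' hai.ne']
    rw [div_le_div_iff₀ hx1 hai]
    have hxi : (0 : ℝ) < x ^ i := pow_pos h0 i
    have e : ((i : ℝ) + 1) * x ^ i - (1 - x ^ (i + 1)) * (((i : ℝ) + 1) * x ^ i)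
        = (i + 1 : ℝ) * x ^ i * x ^ (i + 1) := by ring
    rw [e]
    have e2 : x ^ (2 * i + 1) = x ^ i * x ^ (i + 1) := by rw [← pow_add]; ring_nf
    rw [e2]
    calc x ^ i * x ^ (i + 1) * (1 - x ^ (i + 1))
        ≤ x ^ i * x ^ (i + 1) * (((i : ℝ) + 1) * (1 - x)) := by
          apply mul_le_mul_of_nonneg_left hle; positivity
      _ = (i + 1 : ℝ) * x ^ i * x ^ (i + 1) * (1 - x) := by ring
  have hgeom : ∑ i ∈ range N, x ^ i = (1 - x ^ N) / (1 - x) := by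
    have hxm1 : x - 1 ≠ 0 := ne_of_lt (by linarith : x - 1 < 0)
    rw [geom_sum_eq (show x ≠ 1 by intro hh; rw [hh] at h1; exact lt_irrefl 1 h1),
      div_eq_div_iff hxm1 hx1.ne']
    ring
  have hsum : ∑ i ∈ range N, x ^ (2 * i + 1) / (1 - x)
      ≤ ∑ i ∈ range N, ((i + 1 : ℝ) * x ^ i / (1 - x ^ (i + 1)))
        - ∑ i ∈ range N, (i + 1 : ℝ) * x ^ i := by
    rw [← Finset.sum_sub_distrib]
    exact Finset.sum_le_sum key
  have hAM : (N : ℝ) * x ^ N < ∑ i ∈ range N, x ^ (2 * i + 1) :=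
    sum_odd_pow_gt h0 h1 N hN
  have hfinal : (N : ℝ) * ((1 - x ^ N) / (1 - x)) - (N : ℝ) / (1 - x)
      = -((N : ℝ) * x ^ N) / (1 - x) := by
    have h : (1 : ℝ) - x ≠ 0 := hx1.ne'
    field_simp
    ring
  unfold Hder
  rw [hgeom]
  have hs2 : ∑ i ∈ range N, x ^ (2 * i + 1) / (1 - x)
      = (∑ i ∈ range N, x ^ (2 * i + 1)) / (1 - x) := by
    rw [Finset.sum_div]
  have hlt : ((N : ℝ) * x ^ N) / (1 - x) < (∑ i ∈ range N, x ^ (2 * i + 1)) / (1 - x) :=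
    (div_lt_div_iff_of_pos_right hx1).2 hAM
  rw [neg_div] at hfinal
  linarith [hsum, hfinal, hlt, hs2]

lemma Hfun_zero (N : ℕ) : Hfun N 0 = 0 := by
  unfold Hfun
  simp

lemma Hfun_pos (N : ℕ) (hN : 2 ≤ N) {q : ℝ} (hq0 : 0 < q) (hq1 : q < 1) :
    0 < Hfun N q := by
  have hmono : StrictMonoOn (Hfun N) (Set.Icc 0 q) := by
    apply strictMonoOn_of_deriv_pos (convex_Icc 0 q)
    · intro x hx
      exact (hasDerivAt_Hfun N hx.1 (lt_of_le_of_lt hx.2 hq1)).continuousAt.continuousWithinAt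
    · intro x hx
      rw [interior_Icc] at hx
      rw [(hasDerivAt_Hfun N hx.1.le (lt_trans hx.2 hq1)).deriv]
      exact Hder_pos N hN hx.1 (lt_trans hx.2 hq1)
  have := hmono (Set.left_mem_Icc.2 hq0.le) (Set.right_mem_Icc.2 hq0.le) hq0
  rwa [Hfun_zero] at this

lemma part2 (N : ℕ) (hN : 2 ≤ N) (q : ℝ) (hq0 : 0 < q) (hq1 : q < 1) :
    ∑ d ∈ Finset.Icc 1 N, q ^ d
        + N * ∑' d : ℕ, q ^ (d + N + 1) / ((d + N + 1 : ℕ) : ℝ)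
      < -∑ n ∈ Finset.Icc 1 N, Real.log (1 - q ^ n) := by
  have habs : |q| < 1 := abs_lt.2 ⟨by linarith, hq1⟩
  have h := Real.hasSum_pow_div_log_of_abs_lt_one habs
  have hs := h.summable
  have hkey := Summable.sum_add_tsum_nat_add (f := fun n : ℕ => q ^ (n + 1) / ((n : ℝ) + 1)) N hs
  rw [h.tsum_eq] at hkey
  have htail : ∑' d : ℕ, q ^ (d + N + 1) / ((d + N + 1 : ℕ) : ℝ)
      = -Real.log (1 - q) - ∑ i ∈ range N, q ^ (i + 1) / (i + 1) := by
    have e : ∑' (i : ℕ), q ^ (i + N + 1) / (↑(i + N) + 1)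
        = ∑' d : ℕ, q ^ (d + N + 1) / ((d + N + 1 : ℕ) : ℝ) := by
      apply tsum_congr
      intro d
      push_cast
      ring_nf
    rw [← e]
    linarith [hkey]
  have hIcc1 : ∑ d ∈ Finset.Icc 1 N, q ^ d = ∑ i ∈ range N, q ^ (i + 1) := by
    rw [← Finset.Ico_add_one_right_eq_Icc, Finset.sum_Ico_eq_sum_range]
    simp [add_comm]
  have hIcc2 : ∑ n ∈ Finset.Icc 1 N, Real.log (1 - q ^ n)
      = ∑ i ∈ range N, Real.log (1 - q ^ (i + 1)) := by
    rw [← Finset.Ico_add_one_right_eq_Icc, Finset.sum_Ico_eq_sum_range]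
    simp [add_comm]
  have hpos := Hfun_pos N hN hq0 hq1
  unfold Hfun at hpos
  rw [htail, hIcc1, hIcc2]
  linarith [hpos]

end P2aux

section P1aux

open MeasureTheory Matrix

variable {N : ℕ}

lemma unitary_entry_abs_le (U : Matrix.unitaryGroup (Fin N) ℂ) (i j : Fin N) :
    ‖(U : Matrix (Fin N) (Fin N) ℂ) i j‖ ≤ 1 := by
  have h2 : (U : Matrix (Fin N) (Fin N) ℂ) * star (U : Matrix (Fin N) (Fin N) ℂ) = 1 :=
    Matrix.mem_unitaryGroup_iff.mp U.2
  have hrow : ∑ k, Complex.normSq ((U : Matrix (Fin N) (Fin N) ℂ) i k) = 1 := by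
    have h2' := congrFun (congrFun h2 i) i
    have h3 : ∑ k, (Complex.normSq ((U : Matrix (Fin N) (Fin N) ℂ) i k) : ℂ) = 1 := by
      simpa [Matrix.mul_apply, Matrix.star_apply, Matrix.one_apply_eq,
        Complex.mul_conj] using h2'
    exact_mod_cast h3
  have hle : Complex.normSq ((U : Matrix (Fin N) (Fin N) ℂ) i j) ≤ 1 := by
    rw [← hrow]
    exact Finset.single_le_sum (fun k _ => Complex.normSq_nonneg _) (Finset.mem_univ j)
  rw [Complex.norm_def]
  exact Real.sqrt_le_one.mpr hle

lemma unitary_trace_abs_le (V : Matrix.unitaryGroup (Fin N) ℂ) :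
    ‖Matrix.trace (V : Matrix (Fin N) (Fin N) ℂ)‖ ≤ N := by
  rw [Matrix.trace]
  calc ‖∑ i, Matrix.diag (V : Matrix (Fin N) (Fin N) ℂ) i‖
      ≤ ∑ i, ‖Matrix.diag (V : Matrix (Fin N) (Fin N) ℂ) i‖ :=
        norm_sum_le _ _
    _ ≤ ∑ _i : Fin N, (1 : ℝ) :=
        Finset.sum_le_sum fun i _ => unitary_entry_abs_le V i i
    _ = N := by simp

lemma unitary_trace_pow_abs_le (U : Matrix.unitaryGroup (Fin N) ℂ) (k : ℕ) :
    ‖Matrix.trace ((U : Matrix (Fin N) (Fin N) ℂ) ^ k)‖ ≤ N := by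
  have h : ((U : Matrix (Fin N) (Fin N) ℂ) ^ k) = ((U ^ k : Matrix.unitaryGroup (Fin N) ℂ) :
      Matrix (Fin N) (Fin N) ℂ) := (SubmonoidClass.coe_pow U k).symm
  rw [h]
  exact unitary_trace_abs_le (U ^ k)

lemma freeEnergy_term_nonneg (q : ℝ) (hq0 : 0 ≤ q) (d : ℕ)
    (U : Matrix.unitaryGroup (Fin N) ℂ) :
    0 ≤ q ^ (d + 1) / (d + 1) *
      ‖Matrix.trace ((U : Matrix (Fin N) (Fin N) ℂ) ^ (d + 1))‖ ^ 2 := by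
  apply mul_nonneg
  · apply div_nonneg (pow_nonneg hq0 _)
    positivity
  · positivity

lemma freeEnergy_term_le (q : ℝ) (hq0 : 0 ≤ q) (d : ℕ)
    (U : Matrix.unitaryGroup (Fin N) ℂ) :
    q ^ (d + 1) / (d + 1) *
      ‖Matrix.trace ((U : Matrix (Fin N) (Fin N) ℂ) ^ (d + 1))‖ ^ 2
      ≤ q ^ (d + 1) * (N : ℝ) ^ 2 := by
  apply mul_le_mul
  · apply div_le_self (pow_nonneg hq0 _)
    have : (0 : ℝ) ≤ (d : ℝ) := Nat.cast_nonneg d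
    linarith
  · have h := unitary_trace_pow_abs_le U (d + 1)
    have h0 : (0 : ℝ) ≤ ‖Matrix.trace ((U : Matrix (Fin N) (Fin N) ℂ) ^ (d + 1))‖ :=
      norm_nonneg _
    nlinarith
  · positivity
  · positivity

lemma summable_geom_bound (N : ℕ) (q : ℝ) (hq0 : 0 ≤ q) (hq1 : q < 1) :
    Summable (fun d : ℕ => q ^ (d + 1) * (N : ℝ) ^ 2) := by
  have h := (summable_geometric_of_lt_one hq0 hq1).mul_right ((N : ℝ) ^ 2)
  exact (summable_nat_add_iff 1).2 h

lemma freeEnergy_summable (q : ℝ) (hq0 : 0 ≤ q) (hq1 : q < 1)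
    (U : Matrix.unitaryGroup (Fin N) ℂ) :
    Summable (fun d : ℕ => q ^ (d + 1) / (d + 1) *
      ‖Matrix.trace ((U : Matrix (Fin N) (Fin N) ℂ) ^ (d + 1))‖ ^ 2) :=
  Summable.of_nonneg_of_le (freeEnergy_term_nonneg q hq0 · U)
    (freeEnergy_term_le q hq0 · U) (summable_geom_bound N q hq0 hq1)

lemma freeEnergy_continuous (N : ℕ) (q : ℝ) (hq0 : 0 ≤ q) (hq1 : q < 1) :
    Continuous (freeEnergy N q) := by
  unfold freeEnergy
  refine continuous_tsum (fun d => ?_) (summable_geom_bound N q hq0 hq1) (fun d U => ?_)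
  · have h1 : Continuous fun U : Matrix.unitaryGroup (Fin N) ℂ =>
        (U : Matrix (Fin N) (Fin N) ℂ) ^ (d + 1) :=
      (continuous_pow (d + 1)).comp continuous_subtype_val
    exact continuous_const.mul ((continuous_norm.comp h1.matrix_trace).pow 2)
  · rw [Real.norm_of_nonneg (freeEnergy_term_nonneg q hq0 d U)]
    exact freeEnergy_term_le q hq0 d U

lemma freeEnergy_exists_lt (N : ℕ) (hN : 2 ≤ N) (q : ℝ) (hq0 : 0 < q) (hq1 : q < 1) :
    ∃ A B : Matrix.unitaryGroup (Fin N) ℂ, freeEnergy N q A < freeEnergy N q B := by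
  set i0 : Fin N := ⟨0, by omega⟩ with hi0
  set v : Fin N → ℂ := fun i => if i = i0 then -1 else 1 with hv
  have hmem : Matrix.diagonal v ∈ Matrix.unitaryGroup (Fin N) ℂ := by
    rw [Matrix.mem_unitaryGroup_iff, Matrix.star_eq_conjTranspose,
      Matrix.diagonal_conjTranspose, Matrix.diagonal_mul_diagonal]
    have h1 : (fun i => v i * star v i) = fun _ => (1 : ℂ) := by
      funext i
      by_cases h : i = i0 <;> simp [hv, h]
    rw [h1, Matrix.diagonal_one]
  set A : Matrix.unitaryGroup (Fin N) ℂ := ⟨Matrix.diagonal v, hmem⟩ with hA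
  refine ⟨A, 1, ?_⟩
  have htr1 : ∀ k : ℕ, Matrix.trace (((1 : Matrix.unitaryGroup (Fin N) ℂ) :
      Matrix (Fin N) (Fin N) ℂ) ^ k) = (N : ℂ) := by
    intro k
    have h1 : ((1 : Matrix.unitaryGroup (Fin N) ℂ) : Matrix (Fin N) (Fin N) ℂ) = 1 := rfl
    rw [h1, one_pow, Matrix.trace_one]
    simp
  have htrA : Matrix.trace ((A : Matrix (Fin N) (Fin N) ℂ) ^ 1) = (N : ℂ) - 2 := by
    rw [pow_one]
    have h1 : (A : Matrix (Fin N) (Fin N) ℂ) = Matrix.diagonal v := rfl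
    rw [h1, Matrix.trace_diagonal]
    have h2 : ∀ i, v i = 1 - (if i = i0 then (2 : ℂ) else 0) := by
      intro i
      by_cases h : i = i0 <;> simp [hv, h] <;> norm_num
    rw [Finset.sum_congr rfl fun i _ => h2 i, Finset.sum_sub_distrib,
      Finset.sum_ite_eq' Finset.univ i0 (fun _ => (2 : ℂ))]
    simp
  unfold freeEnergy
  apply Summable.tsum_lt_tsum_of_nonneg
  · exact fun d => freeEnergy_term_nonneg q hq0.le d A
  · intro d
    have h1 := unitary_trace_pow_abs_le A (d + 1)
    have h0 : (0 : ℝ) ≤ ‖Matrix.trace ((A : Matrix (Fin N) (Fin N) ℂ) ^ (d + 1))‖ :=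
      norm_nonneg _
    rw [htr1 (d + 1)]
    have h2 : ‖(N : ℂ)‖ = (N : ℝ) := by
      rw [Complex.norm_natCast]
    rw [h2]
    have h3 : (0 : ℝ) ≤ q ^ (d + 1) / (d + 1) := by
      apply div_nonneg (pow_nonneg hq0.le _); positivity
    have h4 : ‖Matrix.trace ((A : Matrix (Fin N) (Fin N) ℂ) ^ (d + 1))‖ ^ 2
        ≤ (N : ℝ) ^ 2 := by nlinarith
    exact mul_le_mul_of_nonneg_left h4 h3
  · show q ^ (0 + 1) / ((0 : ℕ) + 1) *
        ‖Matrix.trace ((A : Matrix (Fin N) (Fin N) ℂ) ^ (0 + 1))‖ ^ 2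
      < q ^ (0 + 1) / ((0 : ℕ) + 1) *
        ‖Matrix.trace (((1 : Matrix.unitaryGroup (Fin N) ℂ) :
          Matrix (Fin N) (Fin N) ℂ) ^ (0 + 1))‖ ^ 2
    rw [htr1 1, htrA]
    have hcast : (N : ℂ) - 2 = (((N : ℝ) - 2 : ℝ) : ℂ) := by push_cast; ring
    rw [hcast, Complex.norm_real, Real.norm_eq_abs, Complex.norm_natCast]
    have hN2 : (0 : ℝ) ≤ (N : ℝ) - 2 := by
      have : (2 : ℝ) ≤ (N : ℝ) := by exact_mod_cast hN
      linarith
    rw [abs_of_nonneg hN2]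
    have hlt : ((N : ℝ) - 2) ^ 2 < (N : ℝ) ^ 2 := by nlinarith
    have hq' : (0 : ℝ) < q ^ (0 + 1) / ((0 : ℕ) + 1) := by
      simp only [pow_one, Nat.cast_zero]
      norm_num
      exact hq0
    exact mul_lt_mul_of_pos_left hlt hq'
  · exact freeEnergy_summable q hq0.le hq1 1

instance CUE_isOpenPosMeasure (N : ℕ) : (CUE N).IsOpenPosMeasure := by
  have h1 : (Measure.haar : Measure (Matrix.unitaryGroup (Fin N) ℂ)) Set.univ ≠ 0 :=
    (NeZero.ne' _).symm
  have h2 : (Measure.haar : Measure (Matrix.unitaryGroup (Fin N) ℂ)) Set.univ ≠ ⊤ :=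
    measure_ne_top _ _
  have h : (((Measure.haar : Measure (Matrix.unitaryGroup (Fin N) ℂ)) Set.univ)⁻¹ •
      (Measure.haar : Measure (Matrix.unitaryGroup (Fin N) ℂ))).IsHaarMeasure :=
    Measure.IsHaarMeasure.smul _ (ENNReal.inv_ne_zero.2 h2) (ENNReal.inv_ne_top.2 h1)
  have e : CUE N = ((Measure.haar : Measure (Matrix.unitaryGroup (Fin N) ℂ)) Set.univ)⁻¹ •
      (Measure.haar : Measure (Matrix.unitaryGroup (Fin N) ℂ)) := rfl
  rw [e]
  exact h.toIsOpenPosMeasure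

lemma part1 (N : ℕ) (hN : 2 ≤ N) (q : ℝ) (hq0 : 0 < q) (hq1 : q < 1) :
    ∫ U, freeEnergy N q U ∂(CUE N)
      < Real.log (∫ U, Real.exp (freeEnergy N q U) ∂(CUE N)) := by
  set f := freeEnergy N q with hf_def
  have hf : Continuous f := freeEnergy_continuous N q hq0.le hq1
  have hfi : Integrable f (CUE N) :=
    hf.integrable_of_hasCompactSupport (HasCompactSupport.of_compactSpace f)
  have hgi : Integrable (Real.exp ∘ f) (CUE N) :=
    (Real.continuous_exp.comp hf).integrable_of_hasCompactSupport
      (HasCompactSupport.of_compactSpace _)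
  have hJ := strictConvexOn_exp.ae_eq_const_or_map_average_lt
    Real.continuous_exp.continuousOn isClosed_univ
    (Filter.Eventually.of_forall fun x => Set.mem_univ (f x)) hfi hgi
  rcases hJ with hconst | hlt
  · exfalso
    have heq : f = Function.const _ (⨍ x, f x ∂(CUE N)) :=
      (hf.ae_eq_iff_eq (CUE N) continuous_const).mp hconst
    obtain ⟨A, B, hAB⟩ := freeEnergy_exists_lt N hN q hq0 hq1
    have hA := congrFun heq A
    have hB := congrFun heq B
    simp only [Function.const_apply] at hA hB
    rw [hf_def] at hA hB
    rw [hA, hB] at hAB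
    exact lt_irrefl _ hAB
  · rw [average_eq_integral, average_eq_integral] at hlt
    calc ∫ U, f U ∂(CUE N) = Real.log (Real.exp (∫ U, f U ∂(CUE N))) :=
          (Real.log_exp _).symm
      _ < Real.log (∫ U, Real.exp (f U) ∂(CUE N)) :=
          Real.log_lt_log (Real.exp_pos _) hlt

end P1aux

/-- strict quenched/annealed separation, `E[log Z_N] < log E[Z_N]` for `N ≥ 2`. -/
theorem quenched_lt_annealed (N : ℕ) (hN : 2 ≤ N) (q : ℝ) (hq : q ∈ Set.Ioo (0:ℝ) 1) :
    (∫ U, freeEnergy N q U ∂(CUE N)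
        < Real.log (∫ U, Real.exp (freeEnergy N q U) ∂(CUE N))) ∧
    (∑ d ∈ Finset.Icc 1 N, q ^ d
        + N * ∑' d : ℕ, q ^ (d + N + 1) / ((d + N + 1 : ℕ) : ℝ)
      < -∑ n ∈ Finset.Icc 1 N, Real.log (1 - q ^ n)) := by
  exact ⟨part1 N hN q hq.1 hq.2, part2 N hN q hq.1 hq.2⟩
end
end

section
/- For every c > 0, the near-critical quenched and annealed free energy densities remain strictly separated: μ_c < ν_c, where μ_c = (1 − e^{−c})/c + ∫_1^∞ (e^{−cx}/x) dx and ν_c = ∫_0^1 −log(1 − e^{−cx}) dx. -/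
open Real MeasureTheory Set intervalIntegral Filter

lemma ncg_pos (t : ℝ) (ht : 0 < t) : 0 < 1 - Real.exp (-t) := by
  have : Real.exp (-t) < 1 := Real.exp_lt_one_iff.2 (by linarith)
  linarith

lemma ncg_lt (t : ℝ) (ht : 0 < t) : 1 - Real.exp (-t) < t := by
  have : -t + 1 < Real.exp (-t) := Real.add_one_lt_exp (by linarith)
  linarith

lemma ncg_ge (t : ℝ) : t * Real.exp (-t) ≤ 1 - Real.exp (-t) := by
  have h := Real.add_one_le_exp t
  have hp := Real.exp_pos (-t)
  have h2 : Real.exp t * Real.exp (-t) = 1 := by rw [← Real.exp_add]; simp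
  nlinarith

lemma ncg_pos' (c x : ℝ) (hc : 0 < c) (hx : 0 < x) : 0 < 1 - Real.exp (-c * x) := by
  have := ncg_pos (c * x) (by positivity); rwa [neg_mul]

lemma ncg_hasDeriv (c : ℝ) (hc : 0 < c) {x : ℝ} (hx : 0 < x) :
    HasDerivAt (fun y => Real.log (1 - Real.exp (-c * y)))
      (c * Real.exp (-c * x) / (1 - Real.exp (-c * x))) x := by
  have h1 : HasDerivAt (fun y : ℝ => -c * y) (-c) x := by
    simpa using (hasDerivAt_id x).const_mul (-c)
  have h2 : HasDerivAt (fun y : ℝ => Real.exp (-c * y)) (Real.exp (-c*x) * (-c)) x := h1.exp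
  have h3 : HasDerivAt (fun y => 1 - Real.exp (-c * y)) (c * Real.exp (-c * x)) x := by
    have := (hasDerivAt_const x (1:ℝ)).sub h2
    exact this.congr_deriv (by ring)
  exact h3.log (ne_of_gt (ncg_pos' c x hc hx))

-- the dominating function g
noncomputable def ncg_g (c x : ℝ) : ℝ := c * Real.exp (-c * x) / (1 - Real.exp (-c * x))

lemma ncg_g_int (c : ℝ) (hc : 0 < c) : IntegrableOn (ncg_g c) (Ioi 1) := by
  apply MeasureTheory.integrableOn_Ioi_deriv_of_nonneg
    (g := fun y => Real.log (1 - Real.exp (-c * y))) (l := 0)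
  · exact ((ncg_hasDeriv c hc (by norm_num : (0:ℝ) < 1)).continuousAt).continuousWithinAt
  · exact fun x hx => ncg_hasDeriv c hc (lt_trans one_pos hx)
  · intro x hx
    have h1 : 0 < 1 - Real.exp (-c * x) := ncg_pos' c x hc (lt_trans one_pos hx)
    have h2 := Real.exp_pos (-c * x)
    unfold ncg_g
    positivity
  · have h1 : Tendsto (fun y : ℝ => 1 - Real.exp (-c * y)) atTop (nhds 1) := by
      have : Tendsto (fun y : ℝ => -c * y) atTop atBot :=
        (tendsto_const_mul_atBot_of_neg (by linarith : -c < 0)).2 tendsto_id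
      simpa using ((Real.tendsto_exp_atBot.comp this).const_sub 1)
    have := (Real.continuousAt_log one_ne_zero).tendsto.comp h1
    rw [Real.log_one] at this
    exact this

lemma ncg_g_val (c : ℝ) (hc : 0 < c) :
    ∫ x in Ioi (1:ℝ), ncg_g c x = -Real.log (1 - Real.exp (-c)) := by
  have := MeasureTheory.integral_Ioi_of_hasDerivAt_of_tendsto
    (f := fun y => Real.log (1 - Real.exp (-c * y))) (f' := ncg_g c) (a := 1) (m := 0)
    ((ncg_hasDeriv c hc (by norm_num : (0:ℝ) < 1)).continuousAt).continuousWithinAt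
    (fun x hx => ncg_hasDeriv c hc (lt_trans one_pos hx))
    (ncg_g_int c hc)
    ?_
  · simpa using this
  · have h1 : Tendsto (fun y : ℝ => 1 - Real.exp (-c * y)) atTop (nhds 1) := by
      have : Tendsto (fun y : ℝ => -c * y) atTop atBot :=
        (tendsto_const_mul_atBot_of_neg (by linarith : -c < 0)).2 tendsto_id
      simpa using ((Real.tendsto_exp_atBot.comp this).const_sub 1)
    have := (Real.continuousAt_log one_ne_zero).tendsto.comp h1
    rw [Real.log_one] at this
    exact this

lemma ncg_f_le_g (c : ℝ) (hc : 0 < c) {x : ℝ} (hx : 1 < x) :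
    Real.exp (-c * x) / x ≤ ncg_g c x := by
  have hx0 : (0:ℝ) < x := lt_trans one_pos hx
  have h1 : 0 < 1 - Real.exp (-c * x) := ncg_pos' c x hc hx0
  have h2 : 1 - Real.exp (-c * x) < c * x := by
    have := ncg_lt (c * x) (by positivity); rwa [← neg_mul] at this
  have h3 := Real.exp_pos (-c * x)
  rw [ncg_g, div_le_div_iff₀ hx0 h1]
  nlinarith

lemma ncg_f_int (c : ℝ) (hc : 0 < c) :
    IntegrableOn (fun x => Real.exp (-c * x) / x) (Ioi 1) := by
  refine Integrable.mono (ncg_g_int c hc) ?_ ?_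
  · refine (ContinuousOn.aestronglyMeasurable ?_ measurableSet_Ioi)
    exact (Real.continuous_exp.comp (continuous_const.mul continuous_id)).continuousOn.div
      continuousOn_id (fun x hx => ne_of_gt (lt_trans one_pos hx))
  · filter_upwards [ae_restrict_mem measurableSet_Ioi] with x hx
    have hx0 : (0:ℝ) < x := lt_trans one_pos hx
    have h1 : 0 < 1 - Real.exp (-c * x) := ncg_pos' c x hc hx0
    have h2 := Real.exp_pos (-c * x)
    have hf : 0 ≤ Real.exp (-c * x) / x := by positivity
    have hg : 0 ≤ ncg_g c x := by rw [ncg_g]; positivity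
    rw [Real.norm_of_nonneg hf, Real.norm_of_nonneg hg]
    exact ncg_f_le_g c hc hx

lemma ncg_partA (c : ℝ) (hc : 0 < c) :
    ∫ x in Ioi (1:ℝ), Real.exp (-c * x) / x ≤ -Real.log (1 - Real.exp (-c)) := by
  rw [← ncg_g_val c hc]
  exact setIntegral_mono_on (ncg_f_int c hc) (ncg_g_int c hc) measurableSet_Ioi
    (fun x hx => ncg_f_le_g c hc hx)

noncomputable def ncg_G (c x : ℝ) : ℝ := -Real.log (1 - Real.exp (-c * x))

lemma ncg_G_nonneg (c : ℝ) (hc : 0 < c) {x : ℝ} (hx : 0 < x) : 0 ≤ ncg_G c x := by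
  have h1 : 0 < 1 - Real.exp (-c * x) := ncg_pos' c x hc hx
  have h2 : 1 - Real.exp (-c * x) ≤ 1 := by have := Real.exp_pos (-c * x); linarith
  have := Real.log_nonpos (le_of_lt h1) h2
  simp only [ncg_G]; linarith

lemma ncg_G_le (c : ℝ) (hc : 0 < c) {x : ℝ} (hx : 0 < x) :
    ncg_G c x ≤ c * x - Real.log c - Real.log x := by
  have h0 : 0 < c * x := by positivity
  have h1 : c * x * Real.exp (-(c * x)) ≤ 1 - Real.exp (-(c * x)) := ncg_ge (c * x)
  have h2 : 0 < c * x * Real.exp (-(c * x)) := by positivity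
  have h3 := Real.log_le_log h2 h1
  rw [Real.log_mul (ne_of_gt h0) (ne_of_gt (Real.exp_pos _)), Real.log_exp,
    Real.log_mul (ne_of_gt hc) (ne_of_gt hx)] at h3
  rw [ncg_G, neg_mul]
  linarith

lemma ncg_G_meas (c : ℝ) : Measurable (ncg_G c) := by
  exact (Real.measurable_log.comp
    ((continuous_const.sub (Real.continuous_exp.comp
      (continuous_const.mul continuous_id))).measurable)).neg

lemma ncg_bound_int (c : ℝ) (hc : 0 < c) :
    IntegrableOn (fun x => c * x - Real.log c - Real.log x) (Ioc 0 (1:ℝ)) := by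
  have hcont : ContinuousOn
      (fun x => c * x ^ 2 / 2 - x * Real.log c - (x * Real.log x - x)) (Icc 0 (1:ℝ)) := by
    have := Real.continuous_mul_log
    fun_prop
  refine integrableOn_deriv_of_nonneg hcont ?_ ?_
  · intro x hx
    have hx0 : x ≠ 0 := ne_of_gt hx.1
    have h1 : HasDerivAt (fun x : ℝ => c * x ^ 2 / 2) (c * x) x := by
      have := ((hasDerivAt_pow 2 x).const_mul c).div_const 2
      exact this.congr_deriv (by rw [show (2:ℕ) - 1 = 1 from rfl, pow_one]; push_cast; ring)
    have h2 : HasDerivAt (fun x : ℝ => x * Real.log c) (Real.log c) x := by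
      simpa using (hasDerivAt_id x).mul_const (Real.log c)
    have h3 : HasDerivAt (fun x : ℝ => x * Real.log x - x) (Real.log x) x := by
      exact ((Real.hasDerivAt_mul_log hx0).sub (hasDerivAt_id x)).congr_deriv (by ring)
    exact (h1.sub h2).sub h3
  · intro x hx
    have hx1 : 0 < x := hx.1
    have h := Real.log_le_sub_one_of_pos (by positivity : (0:ℝ) < c * x)
    rw [Real.log_mul (ne_of_gt hc) (ne_of_gt hx.1)] at h
    nlinarith [hx.1, hx.2]

lemma ncg_G_int (c : ℝ) (hc : 0 < c) : IntervalIntegrable (ncg_G c) volume 0 1 := by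
  rw [intervalIntegrable_iff_integrableOn_Ioc_of_le zero_le_one]
  refine Integrable.mono (ncg_bound_int c hc) ((ncg_G_meas c).aestronglyMeasurable) ?_
  filter_upwards [ae_restrict_mem measurableSet_Ioc] with x hx
  have h1 := ncg_G_nonneg c hc hx.1
  have h2 := ncg_G_le c hc hx.1
  rw [Real.norm_of_nonneg h1, Real.norm_of_nonneg (le_trans h1 h2)]
  exact h2

noncomputable def ncg_h (c x : ℝ) : ℝ :=
  (∫ t in x..1, ncg_G c t) + x * ncg_G c x - Real.exp (-c * x) / c

lemma ncg_G_contAt (c : ℝ) (hc : 0 < c) {x : ℝ} (hx : 0 < x) : ContinuousAt (ncg_G c) x :=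
  ((ncg_hasDeriv c hc hx).continuousAt).neg

lemma ncg_h_deriv (c : ℝ) (hc : 0 < c) {x : ℝ} (hx : 0 < x) :
    HasDerivAt (ncg_h c) (Real.exp (-c * x) - x * ncg_g c x) x := by
  have hGx : HasDerivAt (ncg_G c) (-(ncg_g c x)) x := (ncg_hasDeriv c hc hx).neg
  have hint : IntervalIntegrable (ncg_G c) volume 1 x := by
    apply ContinuousOn.intervalIntegrable
    intro y hy
    have hy0 : 0 < y := by
      rw [Set.uIcc, Set.mem_Icc] at hy
      have h1 : (0:ℝ) < 1 ⊓ x := lt_inf_iff.2 ⟨one_pos, hx⟩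
      exact lt_of_lt_of_le h1 hy.1
    exact (ncg_G_contAt c hc hy0).continuousWithinAt
  have hmeas : StronglyMeasurableAtFilter (ncg_G c) (nhds x) volume :=
    ⟨Set.univ, Filter.univ_mem, by simpa using (ncg_G_meas c).aestronglyMeasurable⟩
  have h1 : HasDerivAt (fun u => ∫ t in u..(1:ℝ), ncg_G c t) (-(ncg_G c x)) x := by
    have := (intervalIntegral.integral_hasDerivAt_right hint hmeas
      (ncg_G_contAt c hc hx)).neg
    refine this.congr_of_eventuallyEq (Filter.Eventually.of_forall fun u => ?_)
    show ∫ t in u..(1:ℝ), ncg_G c t = -∫ t in (1:ℝ)..u, ncg_G c t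
    rw [intervalIntegral.integral_symm]
  have h2 : HasDerivAt (fun y => y * ncg_G c y)
      (1 * ncg_G c x + x * -(ncg_g c x)) x := (hasDerivAt_id x).mul hGx
  have h3 : HasDerivAt (fun y => Real.exp (-c * y) / c) (-Real.exp (-c * x)) x := by
    have hd : HasDerivAt (fun y : ℝ => -c * y) (-c) x := by
      simpa using (hasDerivAt_id x).const_mul (-c)
    have := hd.exp.div_const c
    exact this.congr_deriv (by rw [mul_neg, neg_div, mul_div_assoc, div_self (ne_of_gt hc), mul_one])
  have := (h1.add h2).sub h3
  exact this.congr_deriv (by ring)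

lemma ncg_h_lt (c : ℝ) (hc : 0 < c) {a b : ℝ} (ha : 0 < a) (hab : a < b) (hb : b ≤ 1) :
    ncg_h c b < ncg_h c a := by
  have hanti : StrictAntiOn (ncg_h c) (Icc a b) := by
    apply strictAntiOn_of_deriv_neg (convex_Icc a b)
    · intro y hy
      exact ((ncg_h_deriv c hc (lt_of_lt_of_le ha hy.1)).continuousAt).continuousWithinAt
    · intro y hy
      rw [interior_Icc] at hy
      have hy0 : 0 < y := lt_trans ha hy.1
      have hy1 : y < 1 := lt_of_lt_of_le hy.2 hb
      rw [(ncg_h_deriv c hc hy0).deriv]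
      have h1 : 0 < 1 - Real.exp (-c * y) := ncg_pos' c y hc hy0
      have h2 : 1 - Real.exp (-c * y) < c * y := by
        have := ncg_lt (c * y) (by positivity); rwa [← neg_mul] at this
      have h3 := Real.exp_pos (-c * y)
      rw [ncg_g, sub_neg, ← mul_div_assoc, lt_div_iff₀ h1]
      nlinarith
  exact hanti (left_mem_Icc.2 (le_of_lt hab)) (right_mem_Icc.2 (le_of_lt hab)) hab

lemma ncg_h_tendsto (c : ℝ) (hc : 0 < c) :
    Tendsto (ncg_h c) (nhdsWithin 0 (Ioc 0 1))
      (nhds ((∫ t in (0:ℝ)..1, ncg_G c t) - 1 / c)) := by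
  have hIoc : IntegrableOn (ncg_G c) (Ioc 0 1) := by
    have := ncg_G_int c hc
    rwa [intervalIntegrable_iff_integrableOn_Ioc_of_le zero_le_one] at this
  have hIcc : IntegrableOn (ncg_G c) (uIcc 0 1) := by
    rw [uIcc_of_le zero_le_one, integrableOn_Icc_iff_integrableOn_Ioc]
    exact hIoc
  -- T1
  have T1 : Tendsto (fun x => ∫ t in x..(1:ℝ), ncg_G c t) (nhdsWithin 0 (Ioc 0 1))
      (nhds (∫ t in (0:ℝ)..1, ncg_G c t)) := by
    have hcont := intervalIntegral.continuousOn_primitive_interval_left (f := ncg_G c)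
      (μ := volume) (a := 0) (b := 1) hIcc
    have h0 : (0:ℝ) ∈ uIcc (0:ℝ) 1 := left_mem_uIcc
    have := (hcont 0 h0).tendsto
    refine this.mono_left (nhdsWithin_mono 0 ?_)
    rw [uIcc_of_le zero_le_one]
    exact Ioc_subset_Icc_self
  -- T2
  have T2 : Tendsto (fun x => x * ncg_G c x) (nhdsWithin 0 (Ioc 0 1)) (nhds 0) := by
    have hupper : Tendsto (fun x : ℝ => c * x ^ 2 - x * Real.log c - x * Real.log x)
        (nhdsWithin 0 (Ioc 0 1)) (nhds 0) := by
      have hcont : Continuous (fun x : ℝ => c * x ^ 2 - x * Real.log c - x * Real.log x) :=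
        ((continuous_const.mul (continuous_pow 2)).sub
          (continuous_id.mul continuous_const)).sub Real.continuous_mul_log
      have := (hcont.tendsto 0).mono_left (nhdsWithin_le_nhds (s := Ioc 0 1))
      simpa using this
    refine tendsto_of_tendsto_of_tendsto_of_le_of_le' tendsto_const_nhds hupper ?_ ?_
    · filter_upwards [eventually_mem_nhdsWithin] with x hx
      exact mul_nonneg (le_of_lt hx.1) (ncg_G_nonneg c hc hx.1)
    · filter_upwards [eventually_mem_nhdsWithin] with x hx
      have h := ncg_G_le c hc hx.1
      have hx0 : 0 ≤ x := le_of_lt hx.1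
      nlinarith
  -- T3
  have T3 : Tendsto (fun x => Real.exp (-c * x) / c) (nhdsWithin 0 (Ioc 0 1))
      (nhds (1 / c)) := by
    have hcont : Continuous (fun x : ℝ => Real.exp (-c * x) / c) :=
      (Real.continuous_exp.comp (continuous_const.mul continuous_id)).div_const c
    have := (hcont.tendsto 0).mono_left (nhdsWithin_le_nhds (s := Ioc 0 1))
    simpa using this
  have h := (T1.add T2).sub T3
  rw [add_zero] at h
  exact h

lemma ncg_partB (c : ℝ) (hc : 0 < c) :
    (1 - Real.exp (-c)) / c + (-Real.log (1 - Real.exp (-c)))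
      < ∫ x in (0:ℝ)..1, ncg_G c x := by
  haveI : (nhdsWithin (0:ℝ) (Ioc 0 1)).NeBot := by
    rw [nhdsWithin_Ioc_eq_nhdsGT one_pos]
    infer_instance
  have hL : ncg_h c (1/2) ≤ (∫ t in (0:ℝ)..1, ncg_G c t) - 1 / c := by
    refine ge_of_tendsto (ncg_h_tendsto c hc) ?_
    filter_upwards [eventually_mem_nhdsWithin,
      (nhdsWithin_le_nhds (s := Ioc 0 1)) (Iio_mem_nhds (by norm_num : (0:ℝ) < 1/2))]
      with x hx hx2
    exact le_of_lt (ncg_h_lt c hc hx.1 hx2 (by norm_num))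
  have hstep : ncg_h c 1 < ncg_h c (1/2) :=
    ncg_h_lt c hc (by norm_num) (by norm_num) le_rfl
  have h1 : ncg_h c 1 = ncg_G c 1 - Real.exp (-c) / c := by
    rw [ncg_h, intervalIntegral.integral_same]
    norm_num
  have hG1 : ncg_G c 1 = -Real.log (1 - Real.exp (-c)) := by
    rw [ncg_G, mul_one]
  have hdiv : (1 - Real.exp (-c)) / c = 1 / c - Real.exp (-c) / c := by ring
  linarith

/-- strict separation of near-critical free energy densities, `μ_c < ν_c`. -/
theorem near_critical_gap (c : ℝ) (hc : 0 < c) :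
    (1 - Real.exp (-c)) / c + (∫ x in Set.Ioi (1:ℝ), Real.exp (-c * x) / x) <
      ∫ x in (0:ℝ)..1, -Real.log (1 - Real.exp (-c * x)) := by
  have hA := ncg_partA c hc
  have hB := ncg_partB c hc
  have : (∫ x in (0:ℝ)..1, ncg_G c x) = ∫ x in (0:ℝ)..1, -Real.log (1 - Real.exp (-c * x)) := rfl
  linarith
end

section
/- For every c > 0, lim_{N→∞} ∑_{d=N+1}^∞ (1 − c/N)^d / d = ∫_1^∞ (e^{−cx}/x) dx, where the sum is over integers d > N and N ranges over integers with N > c (so that 0 < 1 − c/N < 1). -/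
open MeasureTheory Filter Set Real

lemma lemA (N : ℕ) {x : ℝ} (hx0 : 0 ≤ x) (hx1 : x < 1) :
    ∑' d : ℕ, x ^ (d + N + 1) / ((d + N + 1 : ℕ) : ℝ)
      = ∫ t in Set.Ioc (0:ℝ) x, t ^ N / (1 - t) := by
  have key : ∀ d : ℕ, (∫ t in Set.Ioc (0:ℝ) x, t ^ (d + N))
      = x ^ (d + N + 1) / ((d + N + 1 : ℕ) : ℝ) := by
    intro d
    rw [← intervalIntegral.integral_of_le hx0, integral_pow]
    push_cast
    ring
  have hint : ∀ d : ℕ, Integrable (fun t : ℝ => t ^ (d + N))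
      (volume.restrict (Set.Ioc (0:ℝ) x)) := fun d =>
    (continuous_pow _).integrableOn_Ioc
  have hnorm : ∀ d : ℕ, (∫ t in Set.Ioc (0:ℝ) x, ‖t ^ (d + N)‖)
      = x ^ (d + N + 1) / ((d + N + 1 : ℕ) : ℝ) := by
    intro d
    rw [← key d]
    refine setIntegral_congr_fun measurableSet_Ioc fun t ht => ?_
    exact norm_of_nonneg (pow_nonneg ht.1.le _)
  have hsum : Summable fun d : ℕ => ∫ t in Set.Ioc (0:ℝ) x, ‖t ^ (d + N)‖ := by
    refine Summable.of_nonneg_of_le (fun d => integral_nonneg fun t => norm_nonneg _)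
      (fun d => ?_) (summable_geometric_of_lt_one hx0 hx1)
    rw [hnorm d]
    have h1 : x ^ (d + N + 1) ≤ x ^ d :=
      pow_le_pow_of_le_one hx0 hx1.le (by omega)
    have h2 : (1:ℝ) ≤ ((d + N + 1 : ℕ) : ℝ) := by exact_mod_cast Nat.one_le_iff_ne_zero.mpr (by omega)
    calc x ^ (d + N + 1) / ((d + N + 1 : ℕ) : ℝ)
        ≤ x ^ (d + N + 1) / 1 :=
          div_le_div_of_nonneg_left (pow_nonneg hx0 _) one_pos h2 |>.trans_eq (by ring) |>.trans
            (le_refl _)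
      _ = x ^ (d + N + 1) := div_one _
      _ ≤ x ^ d := h1
  calc ∑' d : ℕ, x ^ (d + N + 1) / ((d + N + 1 : ℕ) : ℝ)
      = ∑' d : ℕ, ∫ t in Set.Ioc (0:ℝ) x, t ^ (d + N) :=
        tsum_congr fun d => (key d).symm
    _ = ∫ t in Set.Ioc (0:ℝ) x, ∑' d : ℕ, t ^ (d + N) :=
        MeasureTheory.integral_tsum_of_summable_integral_norm hint hsum
    _ = ∫ t in Set.Ioc (0:ℝ) x, t ^ N / (1 - t) := by
        refine setIntegral_congr_fun measurableSet_Ioc fun t ht => ?_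
        have h0 : 0 ≤ t := ht.1.le
        have h1 : t < 1 := lt_of_le_of_lt ht.2 hx1
        rw [tsum_congr fun d => pow_add t d N, tsum_mul_right,
          tsum_geometric_of_lt_one h0 h1, inv_mul_eq_div]

lemma lemB {c : ℝ} (hc : 0 < c) {N : ℕ} (hN : c < N) :
    (∫ t in (0:ℝ)..(1 - c / N), t ^ N / (1 - t))
      = ∫ u in (1:ℝ)..((N:ℝ)/c), (1 - c * u / N) ^ N / u := by
  have hN0 : (0:ℝ) < N := hc.trans hN
  have hcN : c / (N:ℝ) ≠ 0 := by positivity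
  have h := intervalIntegral.integral_comp_sub_mul (a := (1:ℝ)) (b := (N:ℝ)/c)
    (fun t => t ^ N / (1 - t)) hcN 1
  have e1 : 1 - c / (N:ℝ) * ((N:ℝ)/c) = 0 := by
    field_simp
    ring
  have e2 : 1 - c / (N:ℝ) * 1 = 1 - c / N := by ring
  rw [e1, e2] at h
  have e3 : ∀ u : ℝ, u ≠ 0 → (1 - c * u / N) ^ N / u
      = (c / N) * ((1 - c / N * u) ^ N / (1 - (1 - c / N * u))) := by
    intro u hu
    have : 1 - (1 - c / N * u) = c / N * u := by ring
    rw [this, show (1:ℝ) - c / N * u = 1 - c * u / N by ring, mul_div_assoc',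
      mul_div_mul_left _ _ hcN]
  have e4 : (∫ u in (1:ℝ)..((N:ℝ)/c), (1 - c * u / N) ^ N / u)
      = ∫ u in (1:ℝ)..((N:ℝ)/c), (c / N) * ((1 - c / N * u) ^ N / (1 - (1 - c / N * u))) := by
    have h1N : (1:ℝ) ≤ (N:ℝ)/c := (one_le_div hc).mpr hN.le
    refine intervalIntegral.integral_congr fun u hu => ?_
    rw [Set.uIcc_of_le h1N] at hu
    exact e3 u (by linarith [hu.1])
  rw [e4, intervalIntegral.integral_const_mul, h, smul_eq_mul, ← mul_assoc]
  rw [mul_inv_cancel₀ hcN, one_mul]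

lemma lemC {c : ℝ} (hc : 0 < c) :
    Tendsto (fun N : ℕ =>
        ∫ u in Set.Ioi (1:ℝ),
          (Set.Ioc (1:ℝ) ((N:ℝ)/c)).indicator (fun u => (1 - c * u / N) ^ N / u) u)
      atTop (nhds (∫ x in Set.Ioi (1:ℝ), Real.exp (-c * x) / x)) := by
  apply MeasureTheory.tendsto_integral_of_dominated_convergence
    (bound := fun u => Real.exp (-c * u))
  · intro N
    apply AEStronglyMeasurable.indicator _ measurableSet_Ioc
    exact (Measurable.div (by fun_prop) measurable_id).aestronglyMeasurable
  · exact (exp_neg_integrableOn_Ioi 1 hc).congr_fun (fun u _ => by simp only [neg_mul, mul_comm])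
      measurableSet_Ioi
  · intro N
    rw [ae_restrict_iff' measurableSet_Ioi]
    refine Eventually.of_forall fun u hu => ?_
    have hu1 : (1:ℝ) < u := hu
    by_cases hmem : u ∈ Set.Ioc (1:ℝ) ((N:ℝ)/c)
    · rw [Set.indicator_of_mem hmem]
      have hN0 : (0:ℝ) < N := by
        rcases Nat.eq_zero_or_pos N with h | h
        · exfalso
          have : (N:ℝ)/c = 0 := by rw [h]; simp
          rw [this] at hmem
          exact absurd hmem.2 (by linarith)
        · exact_mod_cast h
      have hle : c * u / N ≤ 1 := by
        rw [div_le_one hN0]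
        have := hmem.2
        calc c * u ≤ c * ((N:ℝ)/c) := by nlinarith
          _ = N := by field_simp
      have hb0 : (0:ℝ) ≤ 1 - c * u / N := by linarith
      have hbe : 1 - c * u / N ≤ Real.exp (-(c * u / N)) := by
        linarith [Real.add_one_le_exp (-(c * u / N))]
      have hpow : (1 - c * u / N) ^ N ≤ Real.exp (-(c * u)) := by
        calc (1 - c * u / N) ^ N ≤ Real.exp (-(c * u / N)) ^ N :=
              pow_le_pow_left₀ hb0 hbe N
          _ = Real.exp (-(c * u)) := by
              rw [← Real.exp_nat_mul]
              congr 1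
              field_simp
      rw [norm_of_nonneg (by positivity)]
      have hu0 : (0:ℝ) < u := by linarith
      calc (1 - c * u / N) ^ N / u ≤ Real.exp (-(c * u)) / u := by gcongr
        _ ≤ Real.exp (-(c * u)) := div_le_self (Real.exp_nonneg _) hu1.le
        _ = Real.exp (-c * u) := by rw [neg_mul]
    · rw [Set.indicator_of_notMem hmem]
      simpa using Real.exp_nonneg (-c * u)
  · rw [ae_restrict_iff' measurableSet_Ioi]
    refine Eventually.of_forall fun u hu => ?_
    have hu1 : (1:ℝ) < u := hu
    have hev : (fun N : ℕ =>
        (Set.Ioc (1:ℝ) ((N:ℝ)/c)).indicator (fun u => (1 - c * u / N) ^ N / u) u)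
          =ᶠ[atTop] fun N : ℕ => (1 - c * u / N) ^ N / u := by
      filter_upwards [Filter.eventually_gt_atTop ⌈c * u⌉₊] with N hN
      have hcu : c * u < N := lt_of_le_of_lt (Nat.le_ceil _) (by exact_mod_cast hN)
      exact Set.indicator_of_mem (Set.mem_Ioc.mpr
        ⟨hu1, by rw [le_div_iff₀ hc]; nlinarith⟩) _
    rw [neg_mul]
    refine Tendsto.congr' hev.symm ?_
    have h := (Real.tendsto_one_add_div_pow_exp (-(c * u))).div_const u
    refine h.congr fun N => ?_
    rw [neg_div, ← sub_eq_add_neg]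

/-- Riemann-sum limit `∑_{d>N} (1-c/N)^d/d → ∫_1^∞ e^{-cx}/x dx`. -/
theorem tail_sum_limit (c : ℝ) (hc : 0 < c) :
    Filter.Tendsto (fun N : ℕ =>
        ∑' d : ℕ, (1 - c / N) ^ (d + N + 1) / ((d + N + 1 : ℕ) : ℝ))
      Filter.atTop
      (nhds (∫ x in Set.Ioi (1:ℝ), Real.exp (-c * x) / x)) := by
  refine Tendsto.congr' ?_ (lemC hc)
  filter_upwards [Filter.eventually_gt_atTop ⌈c⌉₊] with N hN
  have hcN : c < (N:ℝ) := lt_of_le_of_lt (Nat.le_ceil _) (by exact_mod_cast hN)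
  have hN0 : (0:ℝ) < N := hc.trans hcN
  have hx0 : (0:ℝ) ≤ 1 - c / N := by
    rw [sub_nonneg, div_le_one hN0]; exact hcN.le
  have hx1 : 1 - c / (N:ℝ) < 1 := by
    have : 0 < c / (N:ℝ) := by positivity
    linarith
  have h1N : (1:ℝ) ≤ (N:ℝ)/c := (one_le_div hc).mpr hcN.le
  calc ∫ u in Set.Ioi (1:ℝ),
          (Set.Ioc (1:ℝ) ((N:ℝ)/c)).indicator (fun u => (1 - c * u / N) ^ N / u) u
      = ∫ u in Set.Ioc (1:ℝ) ((N:ℝ)/c), (1 - c * u / N) ^ N / u := by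
        rw [integral_indicator measurableSet_Ioc, Measure.restrict_restrict measurableSet_Ioc,
          Set.inter_eq_left.mpr Set.Ioc_subset_Ioi_self]
    _ = ∫ u in (1:ℝ)..((N:ℝ)/c), (1 - c * u / N) ^ N / u :=
        (intervalIntegral.integral_of_le h1N).symm
    _ = ∫ t in (0:ℝ)..(1 - c / N), t ^ N / (1 - t) := (lemB hc hcN).symm
    _ = ∫ t in Set.Ioc (0:ℝ) (1 - c / N), t ^ N / (1 - t) :=
        intervalIntegral.integral_of_le hx0
    _ = ∑' d : ℕ, (1 - c / N) ^ (d + N + 1) / ((d + N + 1 : ℕ) : ℝ) :=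
        (lemA N hx0 hx1).symm
end

section
/- For every q ∈ (0,1) and every N ∈ ℕ, the double sum C_N = ∑_{(k,l): k,l ≥ 1, max(k,l) ≥ N, 1 ≤ |k−l| ≤ N−1} (N − |k−l|)·q^{k+l}/(kl) satisfies the bound C_N ≤ 2·q^{N+1}/(1 − q²). -/
/-- `C_N = ∑_{k,l ≥ 1, max(k,l) ≥ N, 1 ≤ |k-l| ≤ N-1} (N - |k-l|) q^{k+l}/(kl)`. -/
noncomputable def C (q : ℝ) (N : ℕ) : ℝ :=
  ∑' p : ℕ × ℕ,
    if 1 ≤ p.1 ∧ 1 ≤ p.2 ∧ N ≤ max p.1 p.2 ∧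
        1 ≤ ((p.1 : ℤ) - (p.2 : ℤ)).natAbs ∧ ((p.1 : ℤ) - (p.2 : ℤ)).natAbs ≤ N - 1 then
      ((N : ℝ) - (((p.1 : ℤ) - (p.2 : ℤ)).natAbs : ℝ)) * q ^ (p.1 + p.2)
        / ((p.1 : ℝ) * (p.2 : ℝ))
    else 0

set_option maxHeartbeats 1000000 in
/-- the bound `C_N ≤ 2 q^{N+1}/(1-q²)`. -/
theorem C_bound (q : ℝ) (hq : q ∈ Set.Ioo (0:ℝ) 1) (N : ℕ) :
    C q N ≤ 2 * q ^ (N + 1) / (1 - q ^ 2) := by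
  obtain ⟨hq0, hq1⟩ := hq
  have hq2 : q ^ 2 < 1 := by nlinarith
  have hq2nn : (0:ℝ) ≤ q ^ 2 := by positivity
  have hden : (0:ℝ) < 1 - q ^ 2 := by linarith
  have htgt : (0:ℝ) ≤ 2 * q ^ (N + 1) / (1 - q ^ 2) := by positivity
  unfold C
  set f : ℕ × ℕ → ℝ := fun p =>
    if 1 ≤ p.1 ∧ 1 ≤ p.2 ∧ N ≤ max p.1 p.2 ∧
        1 ≤ ((p.1 : ℤ) - (p.2 : ℤ)).natAbs ∧ ((p.1 : ℤ) - (p.2 : ℤ)).natAbs ≤ N - 1 then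
      ((N : ℝ) - (((p.1 : ℤ) - (p.2 : ℤ)).natAbs : ℝ)) * q ^ (p.1 + p.2)
        / ((p.1 : ℝ) * (p.2 : ℝ))
    else 0 with hfdef
  rcases Nat.eq_zero_or_pos N with hN0 | hN1
  · subst hN0
    have hz : f = fun _ => (0:ℝ) := by
      funext p
      simp only [hfdef]
      split_ifs with h
      · exfalso; omega
      · rfl
    rw [hz, tsum_zero]
    exact htgt
  by_cases hsum : Summable f
  swap
  · rw [tsum_eq_zero_of_not_summable hsum]; exact htgt
  -- the dominating function
  set g : ℕ × ℕ → ℝ := fun c =>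
    ((N : ℝ)⁻¹ * q ^ (N + 1) * (q ^ 2) ^ c.1) * (if c.2 < 2 * N then (1:ℝ) else 0) with hgdef
  have hgsum1 : Summable (fun u : ℕ => (N : ℝ)⁻¹ * q ^ (N + 1) * (q ^ 2) ^ u) :=
    (summable_geometric_of_lt_one hq2nn hq2).mul_left _
  have hgsum2 : Summable (fun c : ℕ => if c < 2 * N then (1:ℝ) else 0) := by
    apply summable_of_ne_finset_zero (s := Finset.range (2 * N))
    intro c hc
    rw [Finset.mem_range] at hc
    simp [hc]
  have hgsum : Summable g :=
    hgsum1.mul_of_nonneg hgsum2 (fun u => by positivity)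
      (fun c => by dsimp only; split_ifs <;> norm_num)
  have hNne : (N : ℝ) ≠ 0 := Nat.cast_ne_zero.mpr (by omega)
  have hsum_if : ∑' c : ℕ, (if c < 2 * N then (1:ℝ) else 0) = 2 * N := by
    rw [tsum_eq_sum (s := Finset.range (2 * N)) (f := fun c => if c < 2 * N then (1:ℝ) else 0)
      (fun c hc => by rw [Finset.mem_range] at hc; simp [hc])]
    rw [Finset.sum_congr rfl (fun c hc => if_pos (Finset.mem_range.mp hc))]
    simp [mul_comm]
  have hgval : ∑' c, g c = 2 * q ^ (N + 1) / (1 - q ^ 2) := by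
    have hinner : ∀ u : ℕ, Summable (fun c : ℕ => g (u, c)) := fun u => by
      simpa only [hgdef] using hgsum2.mul_left ((N : ℝ)⁻¹ * q ^ (N + 1) * (q ^ 2) ^ u)
    rw [hgsum.tsum_prod' hinner]
    have hstep : ∀ u : ℕ, ∑' c : ℕ, g (u, c)
        = ((N : ℝ)⁻¹ * q ^ (N + 1) * (q ^ 2) ^ u) * (2 * N) := by
      intro u
      simp only [hgdef]
      rw [tsum_mul_left, hsum_if]
    rw [tsum_congr hstep, tsum_mul_right, tsum_mul_left,
      tsum_geometric_of_lt_one hq2nn hq2]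
    field_simp
  set S : Set (ℕ × ℕ) := {p : ℕ × ℕ | 1 ≤ p.1 ∧ 1 ≤ p.2 ∧ N ≤ max p.1 p.2 ∧
      1 ≤ ((p.1 : ℤ) - (p.2 : ℤ)).natAbs ∧ ((p.1 : ℤ) - (p.2 : ℤ)).natAbs ≤ N - 1} with hS
  have hsupp : Function.support f ⊆ S := by
    intro p hp
    by_contra h
    apply hp
    simp only [hfdef]
    rw [if_neg]
    intro hc
    exact h hc
  rw [← tsum_subtype_eq_of_support_subset hsupp]
  set ψ : S → ℕ × ℕ := fun x =>
    (min x.1.1 x.1.2 - (N - ((x.1.1 : ℤ) - (x.1.2 : ℤ)).natAbs),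
      2 * (((x.1.1 : ℤ) - (x.1.2 : ℤ)).natAbs - 1) + (if x.1.1 < x.1.2 then 1 else 0)) with hψ
  have hinj : Function.Injective ψ := by
    rintro ⟨⟨k1, l1⟩, h1⟩ ⟨⟨k2, l2⟩, h2⟩ heq
    simp only [hS, Set.mem_setOf_eq] at h1 h2
    simp only [hψ, Prod.mk.injEq] at heq
    obtain ⟨e1, e2⟩ := heq
    apply Subtype.ext
    simp only [Prod.mk.injEq]
    split_ifs at e2 with hlt1 hlt2 <;> constructor <;> omega
  have hgnn : ∀ c : ℕ × ℕ, 0 ≤ g c := by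
    intro c
    simp only [hgdef]
    apply mul_nonneg (by positivity)
    split_ifs <;> norm_num
  have hbound : ∀ x : S, f x.1 ≤ g (ψ x) := by
    rintro ⟨⟨k, l⟩, hx⟩
    have hx' := hx
    simp only [hS, Set.mem_setOf_eq] at hx'
    obtain ⟨hk1, hl1, hmax, hd1, hd2⟩ := hx'
    simp only [hfdef, hψ, hgdef]
    rw [if_pos ⟨hk1, hl1, hmax, hd1, hd2⟩]
    set d : ℕ := ((k : ℤ) - (l : ℤ)).natAbs with hd
    set u : ℕ := min k l - (N - d) with hu
    have hdN : d < N := by omega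
    have hcond : 2 * (d - 1) + (if k < l then 1 else 0) < 2 * N := by
      split_ifs <;> omega
    rw [if_pos hcond, mul_one]
    have hq_pow : q ^ (k + l) ≤ q ^ (N + 1 + 2 * u) :=
      pow_le_pow_of_le_one hq0.le hq1.le (by omega)
    have hkl : (0:ℝ) < (k : ℝ) * l := by
      have hk : (0:ℝ) < (k : ℝ) := by exact_mod_cast hk1
      have hl : (0:ℝ) < (l : ℝ) := by exact_mod_cast hl1
      exact mul_pos hk hl
    have hNpos : (0:ℝ) < (N : ℝ) := by exact_mod_cast hN1
    have hNd0 : (0:ℝ) ≤ (N : ℝ) - d := by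
      have : (d : ℝ) ≤ N := by exact_mod_cast hdN.le
      linarith
    have hnat : (N - d) * N ≤ k * l := by
      calc (N - d) * N ≤ min k l * max k l := Nat.mul_le_mul (by omega) hmax
        _ = k * l := min_mul_max k l
    have h2 : ((N : ℝ) - d) * N ≤ (k : ℝ) * l := by
      rw [show ((N : ℝ) - d) = ((N - d : ℕ) : ℝ) from (Nat.cast_sub hdN.le).symm]
      exact_mod_cast hnat
    have hrhs : (N : ℝ)⁻¹ * q ^ (N + 1) * (q ^ 2) ^ u = q ^ (N + 1 + 2 * u) / (N : ℝ) := by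
      rw [← pow_mul, pow_add]
      ring
    rw [hrhs, div_le_div_iff₀ hkl hNpos]
    calc ((N : ℝ) - d) * q ^ (k + l) * N
        ≤ ((N : ℝ) - d) * q ^ (N + 1 + 2 * u) * N :=
          mul_le_mul_of_nonneg_right (mul_le_mul_of_nonneg_left hq_pow hNd0) hNpos.le
      _ = q ^ (N + 1 + 2 * u) * (((N : ℝ) - d) * N) := by ring
      _ ≤ q ^ (N + 1 + 2 * u) * ((k : ℝ) * l) :=
          mul_le_mul_of_nonneg_left h2 (pow_nonneg hq0.le _)
  calc (∑' x : S, f x) ≤ ∑' c, g c :=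
        (hsum.subtype S).tsum_le_tsum_of_inj ψ hinj (fun c _ => hgnn c) hbound hgsum
    _ = 2 * q ^ (N + 1) / (1 - q ^ 2) := hgval
end

section
/- For every q ∈ (0,1) and every N ∈ ℕ, the double sum D_N = ∑_{(k,l): 1 ≤ k,l ≤ N−1, k+l ≥ N+1} (k+l−N)·q^{k+l}/(kl) satisfies the bounds D_N < (1/N)·∑_{m=N+1}^{2N−2} (2N−1−m)·q^m whenever the index set is nonempty, and in particular D_N ≤ N·q^{N+1}. -/
open Finset

/-- `D_N = ∑_{1 ≤ k,l ≤ N-1, k+l ≥ N+1} (k+l-N) q^{k+l}/(kl)`. -/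
noncomputable def D (q : ℝ) (N : ℕ) : ℝ :=
  ∑ p ∈ (Finset.Icc 1 (N - 1) ×ˢ Finset.Icc 1 (N - 1)).filter
      (fun p : ℕ × ℕ => N + 1 ≤ p.1 + p.2),
    ((p.1 : ℝ) + (p.2 : ℝ) - (N : ℝ)) * q ^ (p.1 + p.2) / ((p.1 : ℝ) * (p.2 : ℝ))

lemma pair_sum_eq (q : ℝ) (N : ℕ) :
    ∑ p ∈ (Finset.Icc 1 (N - 1) ×ˢ Finset.Icc 1 (N - 1)).filter
        (fun p : ℕ × ℕ => N + 1 ≤ p.1 + p.2), q ^ (p.1 + p.2)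
      = ∑ x ∈ (Finset.Icc (N + 1) (2 * N - 2)).sigma
          (fun m => Finset.Icc (m - (N - 1)) (N - 1)), q ^ x.1 := by
  refine Finset.sum_nbij' (fun p => ⟨p.1 + p.2, p.1⟩) (fun x => (x.2, x.1 - x.2)) ?_ ?_ ?_ ?_ ?_
  · rintro ⟨k, l⟩ hp
    simp only [Finset.mem_filter, Finset.mem_product, Finset.mem_Icc] at hp
    simp only [Finset.mem_sigma, Finset.mem_Icc]
    omega
  · rintro ⟨m, k⟩ hx
    simp only [Finset.mem_sigma, Finset.mem_Icc] at hx
    simp only [Finset.mem_filter, Finset.mem_product, Finset.mem_Icc]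
    omega
  · rintro ⟨k, l⟩ hp
    simp only [Finset.mem_filter, Finset.mem_product, Finset.mem_Icc] at hp
    show ((k : ℕ), k + l - k) = (k, l)
    rw [Prod.mk.injEq]
    omega
  · rintro ⟨m, k⟩ hx
    simp only [Finset.mem_sigma, Finset.mem_Icc] at hx
    show (⟨k + (m - k), k⟩ : Σ _ : ℕ, ℕ) = ⟨m, k⟩
    rw [show k + (m - k) = m by omega]
  · rintro ⟨k, l⟩ hp
    rfl

/-- the bounds `D_N < (1/N) ∑_{m=N+1}^{2N-2} (2N-1-m) q^m` (when the index set is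
nonempty) and `D_N ≤ N q^{N+1}`. -/
theorem D_bound (q : ℝ) (hq : q ∈ Set.Ioo (0:ℝ) 1) (N : ℕ) :
    (((Finset.Icc 1 (N - 1) ×ˢ Finset.Icc 1 (N - 1)).filter
        (fun p : ℕ × ℕ => N + 1 ≤ p.1 + p.2)).Nonempty →
      D q N < (1 / (N : ℝ)) *
        ∑ m ∈ Finset.Icc (N + 1) (2 * N - 2), (((2 * N - 1 : ℕ) : ℝ) - (m : ℝ)) * q ^ m) ∧
    D q N ≤ (N : ℝ) * q ^ (N + 1) := by
  obtain ⟨hq0, hq1⟩ := hq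
  set T := (Finset.Icc 1 (N - 1) ×ˢ Finset.Icc 1 (N - 1)).filter
      (fun p : ℕ × ℕ => N + 1 ≤ p.1 + p.2) with hT
  have hsum : ∑ p ∈ T, q ^ (p.1 + p.2)
      = ∑ m ∈ Finset.Icc (N + 1) (2 * N - 2), (((2 * N - 1 : ℕ) : ℝ) - (m : ℝ)) * q ^ m := by
    rw [hT, pair_sum_eq, Finset.sum_sigma]
    refine Finset.sum_congr rfl fun m hm => ?_
    simp only [Finset.mem_Icc] at hm
    dsimp only
    rw [Finset.sum_const, Nat.card_Icc]
    rw [show N - 1 + 1 - (m - (N - 1)) = 2 * N - 1 - m by omega, nsmul_eq_mul]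
    congr 1
    rw [Nat.cast_sub (by omega : m ≤ 2 * N - 1)]
  have main : T.Nonempty →
      D q N < (1 / (N : ℝ)) *
        ∑ m ∈ Finset.Icc (N + 1) (2 * N - 2), (((2 * N - 1 : ℕ) : ℝ) - (m : ℝ)) * q ^ m := by
    intro hne
    have hlt : D q N < ∑ p ∈ T, (1 / (N : ℝ)) * q ^ (p.1 + p.2) := by
      rw [D]
      refine Finset.sum_lt_sum_of_nonempty hne ?_
      rintro ⟨k, l⟩ hp
      simp only [hT, Finset.mem_filter, Finset.mem_product, Finset.mem_Icc] at hp
      obtain ⟨⟨⟨hk1, hk2⟩, hl1, hl2⟩, hkl⟩ := hp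
      have hN : 3 ≤ N := by omega
      have hkR : (k : ℝ) + 1 ≤ N := by exact_mod_cast Nat.succ_le_of_lt (by omega)
      have hlR : (l : ℝ) + 1 ≤ N := by exact_mod_cast Nat.succ_le_of_lt (by omega)
      have hk1R : (1 : ℝ) ≤ k := by exact_mod_cast hk1
      have hl1R : (1 : ℝ) ≤ l := by exact_mod_cast hl1
      have hklR : (N : ℝ) + 1 ≤ (k : ℝ) + l := by exact_mod_cast hkl
      have hklpos : (0 : ℝ) < (k : ℝ) * l := by nlinarith
      have hNpos : (0 : ℝ) < N := by positivity
      have key : ((k : ℝ) + l - N) / ((k : ℝ) * l) < 1 / N := by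
        rw [div_lt_div_iff₀ hklpos hNpos]
        nlinarith
      calc ((k : ℝ) + (l : ℝ) - N) * q ^ (k + l) / ((k : ℝ) * l)
          = (((k : ℝ) + l - N) / ((k : ℝ) * l)) * q ^ (k + l) := by ring
        _ < (1 / (N : ℝ)) * q ^ (k + l) :=
            mul_lt_mul_of_pos_right key (pow_pos hq0 _)
    calc D q N < ∑ p ∈ T, (1 / (N : ℝ)) * q ^ (p.1 + p.2) := hlt
      _ = (1 / (N : ℝ)) * ∑ p ∈ T, q ^ (p.1 + p.2) := by rw [Finset.mul_sum]
      _ = _ := by rw [hsum]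
  refine ⟨main, ?_⟩
  by_cases hne : T.Nonempty
  · have hp0 := hne
    obtain ⟨⟨k, l⟩, hp⟩ := hp0
    simp only [hT, Finset.mem_filter, Finset.mem_product, Finset.mem_Icc] at hp
    have hN : 3 ≤ N := by omega
    have hNpos : (0 : ℝ) < N := by positivity
    have hterm : ∀ m ∈ Finset.Icc (N + 1) (2 * N - 2),
        (((2 * N - 1 : ℕ) : ℝ) - (m : ℝ)) * q ^ m ≤ (N : ℝ) * q ^ (N + 1) := by
      intro m hm
      simp only [Finset.mem_Icc] at hm
      have hc1 : ((2 * N - 1 : ℕ) : ℝ) - m ≤ N := by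
        rw [Nat.cast_sub (by omega)]
        push_cast
        have : (N : ℝ) + 1 ≤ m := by exact_mod_cast hm.1
        linarith
      have hc0 : (0 : ℝ) ≤ ((2 * N - 1 : ℕ) : ℝ) - m := by
        rw [Nat.cast_sub (by omega)]
        push_cast
        have : (m : ℝ) ≤ 2 * N - 2 := by
          have := hm.2
          have h2 : ((m : ℕ) : ℝ) ≤ ((2 * N - 2 : ℕ) : ℝ) := by exact_mod_cast this
          rw [Nat.cast_sub (by omega)] at h2
          push_cast at h2
          linarith
        linarith
      have hqm : q ^ m ≤ q ^ (N + 1) :=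
        pow_le_pow_of_le_one hq0.le hq1.le (by omega)
      exact mul_le_mul hc1 hqm (pow_pos hq0 m).le (Nat.cast_nonneg N)
    have hcard : ((Finset.Icc (N + 1) (2 * N - 2)).card : ℝ) ≤ N := by
      rw [Nat.card_Icc]
      exact_mod_cast Nat.le_of_lt_succ (by omega)
    have hsum2 : ∑ m ∈ Finset.Icc (N + 1) (2 * N - 2),
        (((2 * N - 1 : ℕ) : ℝ) - (m : ℝ)) * q ^ m ≤ (N : ℝ) * ((N : ℝ) * q ^ (N + 1)) := by
      calc ∑ m ∈ Finset.Icc (N + 1) (2 * N - 2), (((2 * N - 1 : ℕ) : ℝ) - (m : ℝ)) * q ^ m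
          ≤ (Finset.Icc (N + 1) (2 * N - 2)).card • ((N : ℝ) * q ^ (N + 1)) :=
            Finset.sum_le_card_nsmul _ _ _ hterm
        _ = ((Finset.Icc (N + 1) (2 * N - 2)).card : ℝ) * ((N : ℝ) * q ^ (N + 1)) := by
            rw [nsmul_eq_mul]
        _ ≤ (N : ℝ) * ((N : ℝ) * q ^ (N + 1)) := by
            apply mul_le_mul_of_nonneg_right hcard
            positivity
    have := main hne
    have hfin : (1 / (N : ℝ)) *
        ∑ m ∈ Finset.Icc (N + 1) (2 * N - 2), (((2 * N - 1 : ℕ) : ℝ) - (m : ℝ)) * q ^ m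
        ≤ (N : ℝ) * q ^ (N + 1) := by
      have h2 : (1 / (N : ℝ)) * ((N : ℝ) * ((N : ℝ) * q ^ (N + 1))) = (N : ℝ) * q ^ (N + 1) := by
        field_simp
      calc (1 / (N : ℝ)) * ∑ m ∈ Finset.Icc (N + 1) (2 * N - 2),
            (((2 * N - 1 : ℕ) : ℝ) - (m : ℝ)) * q ^ m
          ≤ (1 / (N : ℝ)) * ((N : ℝ) * ((N : ℝ) * q ^ (N + 1))) := by
            apply mul_le_mul_of_nonneg_left hsum2
            positivity
        _ = (N : ℝ) * q ^ (N + 1) := h2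
    linarith
  · have hT0 : T = ∅ := Finset.not_nonempty_iff_eq_empty.mp hne
    have hD : D q N = 0 := by
      rw [D, ← hT, hT0, Finset.sum_empty]
    rw [hD]
    positivity
end
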